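/- arXiv:1307.0863 — 4 statements merged into one kernel-verified Lean document; each statement's English description precedes it below -/
import Mathlib

section
/- Let q, a₁, a₂, n₁, n₂, n₃, n₄ be integers with n₁, n₂, n₃, n₄ positive, satisfying: (1) n₁⁴n₂³n₃²n₄ = q² + a₁q + a₂ + a₁ + 1; (2) 4 + 3a₁ + 2a₂ + qa₁ ≡ 0 (mod n₁³n₂²n₃); (3) 6 + 3a₁ + a₂ ≡ 0 (mod n₁²n₂); (4) 4 + a₁ ≡ 0 (mod n₁). Then a₁ ≡ −2(q + 1) (mod n₁²n₂). -/
/-- Key valuation lemma: if `N ∣ x + d^2` and `N^3 ∣ d^2 * x^2`, then `N ∣ x`. -/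
lemma key_val_lemma (N x d : ℤ) (h1 : N ∣ x + d^2) (h2 : N^3 ∣ d^2 * x^2) :
    N ∣ x := by
  rcases eq_or_ne d 0 with hd | hd
  · simpa [hd] using h1
  rcases eq_or_ne (x + d^2) 0 with hxd | hxd
  · have hx : x = -(d^2) := by linarith
    have h3 : N^3 ∣ (d^2)^3 := by
      have : d^2 * x^2 = (d^2)^3 := by rw [hx]; ring
      rwa [this] at h2
    have : N ∣ d^2 := (Int.pow_dvd_pow_iff (by norm_num)).mp h3
    rw [hx]
    exact dvd_neg.mpr this
  rcases eq_or_ne x 0 with hx | hx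
  · simp [hx]
  rcases eq_or_ne N 0 with hN | hN
  · exact absurd (zero_dvd_iff.mp (hN ▸ h1)) hxd
  -- main case: pass to natural numbers and compare factorizations
  rw [← Int.natAbs_dvd_natAbs]
  set A := N.natAbs with hA
  set X := x.natAbs with hX
  set B := d.natAbs with hB
  set S := (x + d^2).natAbs with hS
  have hA0 : A ≠ 0 := Int.natAbs_ne_zero.mpr hN
  have hX0 : X ≠ 0 := Int.natAbs_ne_zero.mpr hx
  have hB0 : B ≠ 0 := Int.natAbs_ne_zero.mpr hd
  have hS0 : S ≠ 0 := Int.natAbs_ne_zero.mpr hxd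
  rw [← Nat.factorization_le_iff_dvd hA0 hX0, Finsupp.le_def]
  intro p
  by_cases hp : p.Prime
  swap
  · simp [Nat.factorization_eq_zero_of_not_prime _ hp]
  by_contra hlt
  push_neg at hlt
  -- notation for valuations
  set ν := A.factorization p with hν
  set ξ := X.factorization p with hξ
  set a := B.factorization p with ha
  set σ := S.factorization p with hσ
  -- fact 1 : ν ≤ σ since N ∣ x + d^2
  have f1 : ν ≤ σ := by
    have : A ∣ S := Int.natAbs_dvd_natAbs.mpr h1
    exact (Nat.factorization_le_iff_dvd hA0 hS0).mpr this p
  -- fact 2 : 3 * ν ≤ 2 * a + 2 * ξ  since N^3 ∣ d^2 * x^2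
  have f2 : 3 * ν ≤ 2 * a + 2 * ξ := by
    have hdvd : A ^ 3 ∣ B ^ 2 * X ^ 2 := by
      have := Int.natAbs_dvd_natAbs.mpr h2
      simpa [Int.natAbs_mul, Int.natAbs_pow] using this
    have hBX0 : B ^ 2 * X ^ 2 ≠ 0 := by positivity
    have h' := (Nat.factorization_le_iff_dvd (pow_ne_zero 3 hA0) hBX0).mpr hdvd p
    rw [Nat.factorization_pow, Nat.factorization_mul (pow_ne_zero 2 hB0) (pow_ne_zero 2 hX0)]
      at h'
    simp only [Finsupp.coe_add, Pi.add_apply, Finsupp.smul_apply, Nat.factorization_pow,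
      smul_eq_mul] at h'
    omega
  -- fact 3 : 2 * a ≤ ξ
  have f3 : 2 * a ≤ ξ := by
    have hmin : min σ (2 * a) ≤ ξ := by
      have hdS : (p : ℤ) ^ (min σ (2 * a)) ∣ x + d^2 := by
        have h1' : (p : ℤ) ^ σ ∣ x + d^2 := by
          have hnat : (p ^ σ : ℕ) ∣ S := Nat.ordProj_dvd S p
          have hc : ((p ^ σ : ℕ) : ℤ) ∣ ((S : ℕ) : ℤ) := Int.ofNat_dvd.mpr hnat
          have hS' : ((S : ℕ) : ℤ) ∣ x + d^2 := Int.natAbs_dvd.mpr dvd_rfl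
          have := hc.trans hS'
          simpa using this
        exact (pow_dvd_pow _ (min_le_left _ _)).trans h1'
      have hdd : (p : ℤ) ^ (min σ (2 * a)) ∣ d^2 := by
        have h2' : (p : ℤ) ^ (2 * a) ∣ d^2 := by
          have hnat : (p ^ (2 * a) : ℕ) ∣ B ^ 2 := by
            have := Nat.ordProj_dvd B p
            calc p ^ (2 * a) = (p ^ a) ^ 2 := by rw [← pow_mul, mul_comm]
              _ ∣ B ^ 2 := pow_dvd_pow_of_dvd this 2
          have hc : ((p ^ (2 * a) : ℕ) : ℤ) ∣ ((B ^ 2 : ℕ) : ℤ) := Int.ofNat_dvd.mpr hnat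
          have hB' : ((B ^ 2 : ℕ) : ℤ) ∣ d^2 := by
            push_cast
            exact pow_dvd_pow_of_dvd (Int.natAbs_dvd.mpr dvd_rfl) 2
          have := hc.trans hB'
          simpa using this
        exact (pow_dvd_pow _ (min_le_right _ _)).trans h2'
      have hxdvd : (p : ℤ) ^ (min σ (2 * a)) ∣ x := by
        have : x = (x + d^2) - d^2 := by ring
        rw [this]
        exact dvd_sub hdS hdd
      have : (p ^ (min σ (2 * a)) : ℕ) ∣ X := by
        have := Int.natAbs_dvd_natAbs.mpr hxdvd
        simpa [Int.natAbs_pow] using this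
      exact (Nat.Prime.pow_dvd_iff_le_factorization hp hX0).mp this
    have hσξ : ξ < σ := lt_of_lt_of_le hlt f1
    omega
  omega

theorem a1_cong_neg_two_q_add_one
    (q a1 a2 n1 n2 n3 n4 : ℤ)
    (h1 : 0 < n1) (h2 : 0 < n2) (h3 : 0 < n3) (h4 : 0 < n4)
    (heq : n1^4 * n2^3 * n3^2 * n4 = q^2 + a1*q + a2 + a1 + 1)
    (hc2 : n1^3 * n2^2 * n3 ∣ 4 + 3*a1 + 2*a2 + q*a1)
    (hc3 : n1^2 * n2 ∣ 6 + 3*a1 + a2)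
    (hc4 : n1 ∣ 4 + a1) :
    n1^2 * n2 ∣ a1 + 2*(q + 1) := by
  set N := n1^2 * n2 with hN
  set M := n1^3 * n2^2 with hM
  -- e1 : N ∣ q^2 + a1*q + a2 + a1 + 1
  have e1 : N ∣ q^2 + a1*q + a2 + a1 + 1 :=
    ⟨n1^2 * n2^2 * n3^2 * n4, by rw [← heq]; ring⟩
  -- e2 : N ∣ 4 + 3*a1 + 2*a2 + q*a1
  have e2 : N ∣ 4 + 3*a1 + 2*a2 + q*a1 := (Dvd.intro (n1 * n2 * n3) (by ring)).trans hc2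
  -- h1' : N ∣ (a1 + 2*(q+1)) + (q-1)^2
  have hr1 : N ∣ (a1 + 2*(q + 1)) + (q - 1)^2 := by
    obtain ⟨k1, hk1⟩ := e1
    obtain ⟨k2, hk2⟩ := e2
    obtain ⟨k3, hk3⟩ := hc3
    exact ⟨k1 - k2 + k3, by linear_combination hk1 - hk2 + hk3⟩
  -- hr2 : M ∣ (q - 1) * (a1 + 2*(q+1))
  have hr2 : M ∣ (q - 1) * (a1 + 2*(q + 1)) := by
    have f1 : M ∣ q^2 + a1*q + a2 + a1 + 1 := ⟨n1 * n2 * n3^2 * n4, by rw [← heq]; ring⟩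
    have f2 : M ∣ 4 + 3*a1 + 2*a2 + q*a1 := (Dvd.intro n3 rfl).trans hc2
    obtain ⟨k1, hk1⟩ := f1
    obtain ⟨k2, hk2⟩ := f2
    exact ⟨2 * k1 - k2, by linear_combination 2 * hk1 - hk2⟩
  -- N^3 ∣ (q-1)^2 * (a1 + 2*(q+1))^2
  have hr3 : N^3 ∣ (q - 1)^2 * (a1 + 2*(q + 1))^2 := by
    have hMN : N^3 ∣ M^2 := ⟨n2, by rw [hN, hM]; ring⟩
    have := pow_dvd_pow_of_dvd hr2 2
    calc N^3 ∣ M^2 := hMN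
      _ ∣ ((q - 1) * (a1 + 2*(q + 1)))^2 := this
      _ = (q - 1)^2 * (a1 + 2*(q + 1))^2 := by ring
  exact key_val_lemma N (a1 + 2*(q + 1)) (q - 1) hr1 hr3
end

section
/- Let n₁, n₂, q, k be integers with n₁, n₂ positive, and suppose that n₁³n₂² divides k·n₁²n₂·(q−1) − (q−1)³. Then n₁²n₂ divides (q−1)². -/
theorem dvd_q_sub_one_sq
    (n1 n2 q k : ℤ) (h1 : 0 < n1) (h2 : 0 < n2)
    (hdvd : n1^3 * n2^2 ∣ k * (n1^2 * n2) * (q - 1) - (q - 1)^3) :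
    n1^2 * n2 ∣ (q - 1)^2 := by
  set m : ℤ := q - 1 with hmdef
  rcases eq_or_ne m 0 with hm | hm
  · simp [hm]
  have hA : n1.natAbs ≠ 0 := Int.natAbs_ne_zero.mpr h1.ne'
  have hB : n2.natAbs ≠ 0 := Int.natAbs_ne_zero.mpr h2.ne'
  have hM : m.natAbs ≠ 0 := Int.natAbs_ne_zero.mpr hm
  rw [← Int.natAbs_dvd_natAbs]
  have habs : (n1^2 * n2).natAbs = n1.natAbs ^ 2 * n2.natAbs := by
    rw [Int.natAbs_mul, Int.natAbs_pow]
  have habs2 : (m^2).natAbs = m.natAbs ^ 2 := by rw [Int.natAbs_pow]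
  rw [habs, habs2, ← Nat.factorization_le_iff_dvd (by positivity) (by positivity)]
  rw [Finsupp.le_def]
  intro p
  by_cases hp : p.Prime
  swap
  · simp [Nat.factorization_eq_zero_of_not_prime _ hp]
  set a := n1.natAbs.factorization p with ha
  set b := n2.natAbs.factorization p with hb
  set c := m.natAbs.factorization p with hc
  have goal_eq : (n1.natAbs ^ 2 * n2.natAbs).factorization p = 2 * a + b := by
    rw [Nat.factorization_mul (by positivity) hB, Nat.factorization_pow]
    simp [two_mul, ← ha, ← hb]
  have m2_eq : (m.natAbs ^ 2).factorization p = 2 * c := by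
    rw [Nat.factorization_pow]; simp [← hc, two_mul]
  rw [goal_eq, m2_eq]
  by_contra hlt
  push_neg at hlt
  -- hlt : 2*c < 2*a + b
  have hpa : (p : ℤ)^a ∣ n1 := by
    have := Nat.ordProj_dvd n1.natAbs p
    have h' : ((p^a : ℕ) : ℤ) ∣ (n1.natAbs : ℤ) := Int.natCast_dvd_natCast.mpr this
    push_cast at h'
    exact h'.trans ((abs_dvd _ _).mpr dvd_rfl)
  have hpb : (p : ℤ)^b ∣ n2 := by
    have := Nat.ordProj_dvd n2.natAbs p
    have h' : ((p^b : ℕ) : ℤ) ∣ (n2.natAbs : ℤ) := Int.natCast_dvd_natCast.mpr this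
    push_cast at h'
    exact h'.trans ((abs_dvd _ _).mpr dvd_rfl)
  have hpc : (p : ℤ)^c ∣ m := by
    have := Nat.ordProj_dvd m.natAbs p
    have h' : ((p^c : ℕ) : ℤ) ∣ (m.natAbs : ℤ) := Int.natCast_dvd_natCast.mpr this
    push_cast at h'
    exact h'.trans ((abs_dvd _ _).mpr dvd_rfl)
  -- p^(3c+1) divides n1^3 * n2^2
  have key1 : (p : ℤ)^(3*c+1) ∣ n1^3 * n2^2 := by
    have h1' : (p : ℤ)^(3*a + 2*b) ∣ n1^3 * n2^2 := by
      rw [show 3*a + 2*b = a*3 + b*2 by ring, pow_add, pow_mul, pow_mul]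
      exact mul_dvd_mul (pow_dvd_pow_of_dvd hpa 3) (pow_dvd_pow_of_dvd hpb 2)
    exact (pow_dvd_pow (p:ℤ) (by omega)).trans h1'
  -- p^(3c+1) divides k * (n1^2*n2) * m
  have key2 : (p : ℤ)^(3*c+1) ∣ k * (n1^2 * n2) * m := by
    have h1' : (p : ℤ)^(2*a + b + c) ∣ k * (n1^2 * n2) * m := by
      rw [pow_add, pow_add]
      have : (p:ℤ)^(2*a) * (p:ℤ)^b ∣ n1^2 * n2 := by
        rw [show 2*a = a*2 by ring, pow_mul]
        exact mul_dvd_mul (pow_dvd_pow_of_dvd hpa 2) hpb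
      exact mul_dvd_mul (Dvd.dvd.mul_left this k) hpc
    exact (pow_dvd_pow (p:ℤ) (by omega)).trans h1'
  have key3 : (p : ℤ)^(3*c+1) ∣ m^3 := by
    have : m^3 = k * (n1^2 * n2) * m - (k * (n1^2 * n2) * m - m^3) := by ring
    rw [this]
    exact dvd_sub key2 ((key1.trans hdvd))
  have key4 : p^(3*c+1) ∣ (m^3).natAbs := by
    have := Int.natAbs_dvd_natAbs.mpr key3
    simpa [Int.natAbs_pow] using this
  rw [Int.natAbs_pow] at key4
  have := (Nat.Prime.pow_dvd_iff_le_factorization hp (by positivity)).mp key4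
  rw [Nat.factorization_pow] at this
  simp only [Finsupp.smul_apply, smul_eq_mul, ← hc] at this
  omega
end

section
/- Let q be a real number with q > 1, and let n₁, n₂, n₃, n₄ be positive integers. Suppose a₁ is a real number with −4√q < a₁ < 4√q, that a₁ = k·n₁²n₂ − 2(q+1) for some integer k, and that (√q − 1)⁴ ≤ n₁⁴n₂³n₃²n₄ ≤ (√q + 1)⁴. Then 2n₃√(n₂n₄)·((√q−1)/(√q+1))² < k < 2n₃√(n₂n₄)·((√q+1)/(√q−1))². -/
open Real

theorem k_interval
    (q : ℝ) (hq : 1 < q)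
    (n1 n2 n3 n4 : ℕ) (h1 : 0 < n1) (h2 : 0 < n2) (h3 : 0 < n3) (h4 : 0 < n4)
    (a1 : ℝ) (k : ℤ)
    (ha1_lb : -4 * Real.sqrt q < a1) (ha1_ub : a1 < 4 * Real.sqrt q)
    (hk : a1 = (k : ℝ) * (n1:ℝ)^2 * n2 - 2 * (q + 1))
    (hweil_lb : (Real.sqrt q - 1)^4 ≤ (n1:ℝ)^4 * (n2:ℝ)^3 * (n3:ℝ)^2 * n4)
    (hweil_ub : (n1:ℝ)^4 * (n2:ℝ)^3 * (n3:ℝ)^2 * n4 ≤ (Real.sqrt q + 1)^4) :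
    2 * n3 * Real.sqrt (n2 * n4) * ((Real.sqrt q - 1) / (Real.sqrt q + 1))^2 < (k : ℝ)
    ∧ (k : ℝ) < 2 * n3 * Real.sqrt (n2 * n4) * ((Real.sqrt q + 1) / (Real.sqrt q - 1))^2 := by
  set s := Real.sqrt q with hs_def
  have hq0 : (0:ℝ) ≤ q := by linarith
  have hs2 : s^2 = q := Real.sq_sqrt hq0
  have hs1 : 1 < s := by
    rw [hs_def, show (1:ℝ) = Real.sqrt 1 by simp]
    exact Real.sqrt_lt_sqrt (by norm_num) hq
  set t := Real.sqrt ((n2:ℝ) * n4) with ht_def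
  have ht0 : 0 ≤ t := Real.sqrt_nonneg _
  have ht2 : t^2 = (n2:ℝ) * n4 := Real.sq_sqrt (by positivity)
  have htpos : 0 < t := Real.sqrt_pos.mpr (by positivity)
  have hn1 : (0:ℝ) < n1 := by exact_mod_cast h1
  have hn2 : (0:ℝ) < n2 := by exact_mod_cast h2
  have hn3 : (0:ℝ) < n3 := by exact_mod_cast h3
  have hn4 : (0:ℝ) < n4 := by exact_mod_cast h4
  have hA : (0:ℝ) < (n1:ℝ)^2 * n2 := by positivity
  have hlow : 2 * (s - 1)^2 < (k:ℝ) * ((n1:ℝ)^2 * n2) := by nlinarith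
  have hup : (k:ℝ) * ((n1:ℝ)^2 * n2) < 2 * (s + 1)^2 := by nlinarith
  have hX0 : (0:ℝ) ≤ (n1:ℝ)^2 * n2 * n3 * t := by positivity
  have hXsq : ((n1:ℝ)^2 * n2 * n3 * t)^2 = (n1:ℝ)^4 * (n2:ℝ)^3 * (n3:ℝ)^2 * n4 := by
    have h : ((n1:ℝ)^2 * n2 * n3 * t)^2 = (n1:ℝ)^4 * (n2:ℝ)^2 * (n3:ℝ)^2 * t^2 := by ring
    rw [h, ht2]; ring
  have hB : (n1:ℝ)^2 * n2 * n3 * t ≤ (s + 1)^2 := by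
    have hsq : ((n1:ℝ)^2 * n2 * n3 * t)^2 ≤ ((s+1)^2)^2 := by
      rw [hXsq, show ((s+1)^2)^2 = (s+1)^4 by ring]; exact hweil_ub
    have h := Real.sqrt_le_sqrt hsq
    rwa [Real.sqrt_sq hX0, Real.sqrt_sq (by positivity)] at h
  have hB' : (s - 1)^2 ≤ (n1:ℝ)^2 * n2 * n3 * t := by
    have hsq : ((s-1)^2)^2 ≤ ((n1:ℝ)^2 * n2 * n3 * t)^2 := by
      rw [hXsq, show ((s-1)^2)^2 = (s-1)^4 by ring]; exact hweil_lb
    have h := Real.sqrt_le_sqrt hsq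
    rwa [Real.sqrt_sq (by positivity), Real.sqrt_sq hX0] at h
  have hsm : (0:ℝ) < (s - 1)^2 := pow_pos (by linarith) 2
  have hsp : (0:ℝ) < (s + 1)^2 := by positivity
  clear_value s t
  clear hs_def ht_def hk ha1_lb ha1_ub hweil_lb hweil_ub
  constructor
  · have key : 2 * (n3:ℝ) * t * (s - 1)^2 < (k:ℝ) * (s + 1)^2 := by
      have step : (2 * (n3:ℝ) * t * (s - 1)^2) * ((n1:ℝ)^2 * n2)
          < ((k:ℝ) * (s + 1)^2) * ((n1:ℝ)^2 * n2) := by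
        calc (2 * (n3:ℝ) * t * (s - 1)^2) * ((n1:ℝ)^2 * n2)
            = 2 * (s-1)^2 * ((n1:ℝ)^2 * n2 * n3 * t) := by ring
          _ ≤ 2 * (s-1)^2 * ((s+1)^2) := mul_le_mul_of_nonneg_left hB (by positivity)
          _ = (2 * (s - 1)^2) * (s+1)^2 := by ring
          _ < ((k:ℝ) * ((n1:ℝ)^2 * n2)) * (s+1)^2 := mul_lt_mul_of_pos_right hlow hsp
          _ = ((k:ℝ) * (s + 1)^2) * ((n1:ℝ)^2 * n2) := by ring
      exact lt_of_mul_lt_mul_right step hA.le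
    calc 2 * (n3:ℝ) * t * ((s - 1) / (s + 1))^2
        = (2 * (n3:ℝ) * t * (s - 1)^2) / (s + 1)^2 := by rw [div_pow]; ring
      _ < (k:ℝ) := by rw [div_lt_iff₀ hsp]; linarith
  · have key : (k:ℝ) * (s - 1)^2 < 2 * (n3:ℝ) * t * (s + 1)^2 := by
      have step : ((k:ℝ) * (s - 1)^2) * ((n1:ℝ)^2 * n2)
          < (2 * (n3:ℝ) * t * (s + 1)^2) * ((n1:ℝ)^2 * n2) := by
        calc ((k:ℝ) * (s - 1)^2) * ((n1:ℝ)^2 * n2)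
            = ((k:ℝ) * ((n1:ℝ)^2 * n2)) * (s-1)^2 := by ring
          _ < (2 * (s + 1)^2) * (s-1)^2 := mul_lt_mul_of_pos_right hup hsm
          _ = 2 * (s+1)^2 * ((s-1)^2) := by ring
          _ ≤ 2 * (s+1)^2 * ((n1:ℝ)^2 * n2 * n3 * t) := mul_le_mul_of_nonneg_left hB' (by positivity)
          _ = (2 * (n3:ℝ) * t * (s + 1)^2) * ((n1:ℝ)^2 * n2) := by ring
      exact lt_of_mul_lt_mul_right step hA.le
    calc (k:ℝ) < (2 * (n3:ℝ) * t * (s + 1)^2) / (s - 1)^2 := by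
          rw [lt_div_iff₀ hsm]; linarith
      _ = 2 * (n3:ℝ) * t * ((s + 1) / (s - 1))^2 := by rw [div_pow]; ring
end

section
/- Let n₂, n₃, n₄ be positive integers with 2n₃√(n₂n₄) not an integer, and let n₁ be a positive integer satisfying n₁ < 10n₃^{1/2}n₄^{1/4}/(δ·n₂^{1/4}) + 1, where δ = ‖2n₃√(n₂n₄)‖. Then n₁ < 60·n₂^{1/4}·n₃^{3/2}·n₄^{3/4} + 1. -/
set_option maxHeartbeats 1000000


open Real

/-- Distance from a real number to the nearest integer. -/
noncomputable def distNearestInt (x : ℝ) : ℝ := |x - round x|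

theorem n1_final_bound
    (n1 n2 n3 n4 : ℕ) (h1 : 0 < n1) (h2 : 0 < n2) (h3 : 0 < n3) (h4 : 0 < n4)
    (hnotint : ¬ ∃ z : ℤ, (z : ℝ) = 2 * n3 * Real.sqrt ((n2:ℝ) * n4))
    (hbd : (n1 : ℝ) < 10 * (n3:ℝ)^((1:ℝ)/2) * (n4:ℝ)^((1:ℝ)/4)
        / (distNearestInt (2 * n3 * Real.sqrt ((n2:ℝ) * n4)) * (n2:ℝ)^((1:ℝ)/4)) + 1) :
    (n1 : ℝ) < 60 * (n2:ℝ)^((1:ℝ)/4) * (n3:ℝ)^((3:ℝ)/2) * (n4:ℝ)^((3:ℝ)/4) + 1 := by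
  have hn2 : (1:ℝ) ≤ n2 := by exact_mod_cast h2
  have hn3 : (1:ℝ) ≤ n3 := by exact_mod_cast h3
  have hn4 : (1:ℝ) ≤ n4 := by exact_mod_cast h4
  set s := Real.sqrt ((n2:ℝ) * n4) with hsdef
  have hs1 : (1:ℝ) ≤ s := by
    rw [hsdef, show (1:ℝ) = Real.sqrt 1 by simp]
    exact Real.sqrt_le_sqrt (by nlinarith)
  have hssq : s ^ 2 = (n2:ℝ) * n4 := Real.sq_sqrt (by positivity)
  set x := 2 * (n3:ℝ) * s with hxdef
  have hx2 : (2:ℝ) ≤ x := by nlinarith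
  set m := round x with hmdef
  have hmx : |x - m| ≤ 1/2 := abs_sub_round x
  have hmx' := abs_le.mp hmx
  have hxm : x ≠ (m:ℝ) := fun h => hnotint ⟨m, h.symm⟩
  have hsq : x ^ 2 = ((4 * n2 * n3 ^ 2 * n4 : ℤ) : ℝ) := by
    push_cast
    rw [hxdef]
    nlinarith [hssq]
  have hmpos : (0:ℝ) ≤ (m:ℝ) := by nlinarith
  have h1abs : (1:ℝ) ≤ |x ^ 2 - (m:ℝ) ^ 2| := by
    have hne : (4 * n2 * n3 ^ 2 * n4 : ℤ) - m ^ 2 ≠ 0 := by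
      intro h
      apply hxm
      have h' : (4 * n2 * n3 ^ 2 * n4 : ℤ) = m ^ 2 := by omega
      have hx2m : x ^ 2 = (m:ℝ) ^ 2 := by
        rw [hsq, h']; push_cast; ring
      have hfac : (x - m) * (x + m) = 0 := by nlinarith
      rcases mul_eq_zero.mp hfac with h0 | h0
      · linarith
      · linarith
    rw [hsq, show ((m:ℝ)) ^ 2 = ((m ^ 2 : ℤ) : ℝ) by push_cast; ring, ← Int.cast_sub,
      ← Int.cast_abs]
    exact_mod_cast Int.one_le_abs hne
  -- key lower bound on δ
  have habs_factor : |x ^ 2 - (m:ℝ) ^ 2| = |x - m| * (x + m) := by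
    rw [show x ^ 2 - (m:ℝ) ^ 2 = (x - m) * (x + m) by ring, abs_mul,
      abs_of_nonneg (by linarith : (0:ℝ) ≤ x + m)]
  have hdelta : 1 ≤ distNearestInt x * (6 * (n3:ℝ) * s) := by
    have h3x : x + m ≤ 3 * x := by nlinarith
    have hd0 : 0 ≤ |x - m| := abs_nonneg _
    have : 1 ≤ |x - m| * (3 * x) := by nlinarith [h1abs, habs_factor]
    have hdd : distNearestInt x = |x - (m:ℝ)| := by rw [distNearestInt, hmdef]
    calc (1:ℝ) ≤ |x - m| * (3 * x) := this
      _ = distNearestInt x * (6 * (n3:ℝ) * s) := by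
          rw [hdd, hxdef]; ring
  set δ := distNearestInt x with hδdef
  have hδ0 : 0 < δ := by
    rcases lt_or_ge 0 δ with h | h
    · exact h
    · nlinarith
  -- rpow algebra
  set a := (n2:ℝ) ^ ((1:ℝ)/4) with hadef
  set b := (n3:ℝ) ^ ((1:ℝ)/2) with hbdef
  set c := (n4:ℝ) ^ ((1:ℝ)/4) with hcdef
  have ha0 : 0 < a := Real.rpow_pos_of_pos (by positivity) _
  have hb0 : 0 < b := Real.rpow_pos_of_pos (by positivity) _
  have hc0 : 0 < c := Real.rpow_pos_of_pos (by positivity) _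
  have ha2 : a ^ 2 = (n2:ℝ) ^ ((1:ℝ)/2) := by
    rw [hadef, ← Real.rpow_natCast ((n2:ℝ) ^ ((1:ℝ)/4)) 2, ← Real.rpow_mul (by positivity)]
    norm_num
  have hc2 : c ^ 2 = (n4:ℝ) ^ ((1:ℝ)/2) := by
    rw [hcdef, ← Real.rpow_natCast ((n4:ℝ) ^ ((1:ℝ)/4)) 2, ← Real.rpow_mul (by positivity)]
    norm_num
  have hb2 : b ^ 2 = (n3:ℝ) := by
    rw [hbdef, ← Real.rpow_natCast ((n3:ℝ) ^ ((1:ℝ)/2)) 2, ← Real.rpow_mul (by positivity)]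
    norm_num
  have hb3 : b ^ 3 = (n3:ℝ) ^ ((3:ℝ)/2) := by
    rw [hbdef, ← Real.rpow_natCast ((n3:ℝ) ^ ((1:ℝ)/2)) 3, ← Real.rpow_mul (by positivity)]
    norm_num
  have hc3 : c ^ 3 = (n4:ℝ) ^ ((3:ℝ)/4) := by
    rw [hcdef, ← Real.rpow_natCast ((n4:ℝ) ^ ((1:ℝ)/4)) 3, ← Real.rpow_mul (by positivity)]
    norm_num
  have hs_ac : s = a ^ 2 * c ^ 2 := by
    rw [ha2, hc2, hsdef, Real.sqrt_eq_rpow, Real.mul_rpow (by positivity) (by positivity)]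
  have hdelta' : 1 ≤ δ * (6 * b ^ 2 * (a ^ 2 * c ^ 2)) := by
    rw [hs_ac, ← hb2] at hdelta
    linarith [hdelta]
  have hkey : 10 * b * c / (δ * a) ≤ 60 * a * b ^ 3 * c ^ 3 := by
    rw [div_le_iff₀ (by positivity)]
    nlinarith [mul_le_mul_of_nonneg_left hdelta' (by positivity : (0:ℝ) ≤ 10 * b * c)]
  rw [← hb3, ← hc3]
  calc (n1:ℝ) < 10 * b * c / (δ * a) + 1 := hbd
    _ ≤ 60 * a * b ^ 3 * c ^ 3 + 1 := by linarith
end
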